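/- For every nonempty finite word σ over 2^AP and all LTL formulas φ₁, φ₂, φ₃: σ^ω ⊨ φ₁ U (φ₂ ∧ Gφ₃) if and only if σ^ω ⊨ (φ₁ U φ₂) ∧ Gφ₃. -/

import Mathlib

/-- Syntax of LTL formulas (with general negation, next, until, weak until). -/
inductive LTL (AP : Type) : Type where
  | tru : LTL AP
  | atom : AP → LTL AP
  | neg : LTL AP → LTL AP
  | conj : LTL AP → LTL AP → LTL AP
  | disj : LTL AP → LTL AP → LTL AP
  | next : LTL AP → LTL AP
  | untl : LTL AP → LTL AP → LTL AP
  | wuntl : LTL AP → LTL AP → LTL AP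

/-- Infinite words over the alphabet `2^AP`. -/
def Word (AP : Type) := ℕ → Set AP

/-- The suffix `ρ[i..]` of an infinite word. -/
def Word.suffix {AP : Type} (ρ : Word AP) (i : ℕ) : Word AP := fun n => ρ (n + i)

/-- Satisfaction of an LTL formula on an infinite word. -/
def sat {AP : Type} : Word AP → LTL AP → Prop
  | _, .tru => True
  | ρ, .atom a => a ∈ ρ 0
  | ρ, .neg φ => ¬ sat ρ φ
  | ρ, .conj φ ψ => sat ρ φ ∧ sat ρ ψ
  | ρ, .disj φ ψ => sat ρ φ ∨ sat ρ ψ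
  | ρ, .next φ => sat (ρ.suffix 1) φ
  | ρ, .untl φ ψ => ∃ i, sat (ρ.suffix i) ψ ∧ ∀ j < i, sat (ρ.suffix j) φ
  | ρ, .wuntl φ ψ =>
      (∀ i, sat (ρ.suffix i) φ) ∨ ∃ i, sat (ρ.suffix i) ψ ∧ ∀ j < i, sat (ρ.suffix j) φ

/-- Eventually: `F φ = ⊤ U φ`. -/
def LTL.ev {AP : Type} (φ : LTL AP) : LTL AP := LTL.untl LTL.tru φ

/-- Always: `G φ = φ W ⊥`. -/
def LTL.alw {AP : Type} (φ : LTL AP) : LTL AP := LTL.wuntl φ (LTL.neg LTL.tru)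

/-- Semantic equivalence of formulas on all infinite words. -/
def LTLequiv {AP : Type} (φ ψ : LTL AP) : Prop := ∀ ρ : Word AP, sat ρ φ ↔ sat ρ ψ

/-- Prepend a finite word `l` to an infinite word `ρ`. -/
def prepend {AP : Type} (l : List (Set AP)) (ρ : Word AP) : Word AP :=
  fun i => if h : i < l.length then l.get ⟨i, h⟩ else ρ (i - l.length)

/-- A fairness formula: satisfaction is closed under suffixes and under prepending
arbitrary finite prefixes. -/
def Fairness {AP : Type} (φ : LTL AP) : Prop :=
  (∀ ρ : Word AP, sat ρ φ → ∀ i, sat (ρ.suffix i) φ) ∧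
  (∀ ρ : Word AP, sat ρ φ → ∀ ρ₁ : List (Set AP), sat (prepend ρ₁ ρ) φ)

/-- The cyclic (periodic) word `σ^ω` obtained by repeating a nonempty finite word `σ`. -/
def cyc {AP : Type} (σ : List (Set AP)) (h : σ ≠ []) : Word AP :=
  fun i => σ.get ⟨i % σ.length, Nat.mod_lt i (List.length_pos_iff.mpr h)⟩

/-- Propositional formulas: atoms and negated atoms combined with `∧`, `∨`. -/
inductive PropForm (AP : Type) : Type where
  | atom : AP → PropForm AP
  | natom : AP → PropForm AP
  | conj : PropForm AP → PropForm AP → PropForm AP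
  | disj : PropForm AP → PropForm AP → PropForm AP

/-- Satisfaction of a propositional formula at a single letter `A ∈ 2^AP`. -/
def psat {AP : Type} (A : Set AP) : PropForm AP → Prop
  | .atom a => a ∈ A
  | .natom a => a ∉ A
  | .conj l₁ l₂ => psat A l₁ ∧ psat A l₂
  | .disj l₁ l₂ => psat A l₁ ∨ psat A l₂

/-- Embedding of propositional formulas into LTL. -/
def PropForm.toLTL {AP : Type} : PropForm AP → LTL AP
  | .atom a => .atom a
  | .natom a => .neg (.atom a)
  | .conj l₁ l₂ => .conj l₁.toLTL l₂.toLTL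
  | .disj l₁ l₂ => .disj l₁.toLTL l₂.toLTL

/-- A finite Kripke structure with a total transition relation. -/
structure Kripke (AP : Type) where
  S : Type
  [fin : Fintype S]
  init : S
  T : S → S → Prop
  total : ∀ s, ∃ t, T s t
  L : S → Set AP

/-- `π` is an infinite path of `K` starting at the initial state. -/
def Kripke.IsPath {AP : Type} (K : Kripke AP) (π : ℕ → K.S) : Prop :=
  π 0 = K.init ∧ ∀ i, K.T (π i) (π (i + 1))

/-- There is a nonempty finite path from `s` to `t` staying inside `B`. -/
def Kripke.ConnIn {AP : Type} (K : Kripke AP) (B : Set K.S) (s t : K.S) : Prop :=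
  ∃ n > 0, ∃ f : ℕ → K.S, f 0 = s ∧ f n = t ∧
    (∀ i < n, K.T (f i) (f (i + 1))) ∧ (∀ i ≤ n, f i ∈ B)

/-- `B` is a nontrivial strongly connected set of states. -/
def Kripke.IsSCSet {AP : Type} (K : Kripke AP) (B : Set K.S) : Prop :=
  ∀ s ∈ B, ∀ t ∈ B, K.ConnIn B s t

/-- Some state of `B` is reachable from the initial state. -/
def Kripke.Reachable {AP : Type} (K : Kripke AP) (B : Set K.S) : Prop :=
  ∃ s ∈ B, ∃ n, ∃ f : ℕ → K.S, f 0 = K.init ∧ f n = s ∧ ∀ i < n, K.T (f i) (f (i + 1))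

/-- The periodic word `({a}{}{a,c})^ω`. -/
def word1 {AP : Type} (a c : AP) : Word AP :=
  fun i => if i % 3 = 0 then {a} else if i % 3 = 1 then ∅ else {a, c}

/-- The periodic word `({a}{a,c}{})^ω`. -/
def word2 {AP : Type} (a c : AP) : Word AP :=
  fun i => if i % 3 = 0 then {a} else if i % 3 = 1 then {a, c} else ∅

/-! On a periodic word, `G φ` holds at one suffix iff it holds at all of them: every position
recurs, a multiple of the period later, beyond any given position. Hence the `G φ₃` conjunct
can be pulled out of the until. -/

theorem sat_alw_iff {AP : Type} (ρ : Word AP) (φ : LTL AP) :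
    sat ρ φ.alw ↔ ∀ i, sat (ρ.suffix i) φ := by
  refine ⟨?_, Or.inl⟩
  rintro (hφ | ⟨i, hfalse, -⟩)
  · exact hφ
  · exact absurd trivial hfalse

theorem Word.suffix_suffix {AP : Type} (ρ : Word AP) (i k : ℕ) :
    (ρ.suffix i).suffix k = ρ.suffix (k + i) := by
  funext n
  simp only [Word.suffix, Nat.add_assoc]

theorem Word.suffix_add_mul_of_periodic {AP : Type} {ρ : Word AP} {p : ℕ}
    (hρ : Function.Periodic ρ p) (j m : ℕ) : ρ.suffix (j + m * p) = ρ.suffix j := by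
  funext n
  simp only [Word.suffix, ← Nat.add_assoc]
  simpa using hρ.nat_mul m (n + j)

theorem sat_alw_suffix_iff_of_periodic {AP : Type} {ρ : Word AP} {p : ℕ}
    (hρ : Function.Periodic ρ p) (hp : 0 < p) (φ : LTL AP) (i : ℕ) :
    sat (ρ.suffix i) φ.alw ↔ sat ρ φ.alw := by
  simp only [sat_alw_iff, Word.suffix_suffix]
  refine ⟨fun hφ j => ?_, fun hφ k => hφ (k + i)⟩
  have hi : i ≤ j + i * p := le_add_left (Nat.le_mul_of_pos_right i hp)
  rw [← Word.suffix_add_mul_of_periodic hρ j i, ← Nat.sub_add_cancel hi]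
  exact hφ _

theorem cyc_periodic {AP : Type} (σ : List (Set AP)) (h : σ ≠ []) :
    Function.Periodic (cyc σ h) σ.length := by
  intro i
  simp only [cyc, Nat.add_mod_right]

/-- On cyclic words: σ^ω ⊨ φ₁ U (φ₂ ∧ Gφ₃) iff σ^ω ⊨ (φ₁ U φ₂) ∧ Gφ₃. -/
theorem until_conj_G_c {AP : Type} (σ : List (Set AP)) (h : σ ≠ [])
    (φ₁ φ₂ φ₃ : LTL AP) :
    sat (cyc σ h) (φ₁.untl (φ₂.conj φ₃.alw)) ↔
      sat (cyc σ h) (LTL.conj (φ₁.untl φ₂) φ₃.alw) := by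
  have hG : ∀ i, sat ((cyc σ h).suffix i) φ₃.alw ↔ sat (cyc σ h) φ₃.alw :=
    sat_alw_suffix_iff_of_periodic (cyc_periodic σ h) (List.length_pos_iff.mpr h) φ₃
  constructor
  · rintro ⟨i, ⟨hφ₂, hG₃⟩, hφ₁⟩
    exact ⟨⟨i, hφ₂, hφ₁⟩, (hG i).1 hG₃⟩
  · rintro ⟨⟨i, hφ₂, hφ₁⟩, hG₃⟩
    exact ⟨i, ⟨hφ₂, (hG i).2 hG₃⟩, hφ₁⟩
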